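/- arXiv:1205.5927 — 2 statements merged into one kernel-verified Lean document; each statement's English description precedes it below -/
import Mathlib

section
/- Let K₀ ⊆ K be two nonempty closed convex sets in R^m. For any x ∈ R^m, dist(P_K(x), K₀)² + dist(x, K)² ≤ dist(x, K₀)². -/
/-!
Let `p = P_K x`. Since `p` minimizes the distance from `x` to the convex set `K`, the variational
inequality `⟪x - p, y - p⟫ ≤ 0` holds for every `y ∈ K`, so the triangle `x, p, y` has an obtuse
angle at `p`: `‖p - y‖² + ‖x - p‖² ≤ ‖x - y‖²`. For `y ∈ K₀ ⊆ K` the left side dominates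
`dist(p, K₀)² + dist(x, K)²`; taking the infimum over `y ∈ K₀` gives the claim.
-/

open Metric
open scoped RealInnerProductSpace

section Projection

variable {E : Type*} [NormedAddCommGroup E] [InnerProductSpace ℝ E]

theorem real_inner_sub_le_zero_of_forall_norm_sub_le {K : Set E} (hK : Convex ℝ K) {x p : E}
    (hp : p ∈ K) (hmin : ∀ z ∈ K, ‖x - p‖ ≤ ‖x - z‖) {y : E} (hy : y ∈ K) :
    ⟪x - p, y - p⟫ ≤ 0 := by
  have : Nonempty K := ⟨⟨p, hp⟩⟩
  have hinf : ‖x - p‖ = ⨅ z : K, ‖x - z‖ :=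
    le_antisymm (le_ciInf fun z => hmin z z.2)
      (ciInf_le ⟨0, by rintro _ ⟨z, rfl⟩; exact norm_nonneg (x - z)⟩ (⟨p, hp⟩ : K))
  exact (norm_eq_iInf_iff_real_inner_le_zero hK hp).1 hinf y hy

theorem norm_sub_sq_add_norm_sub_sq_le_of_forall_norm_sub_le {K : Set E} (hK : Convex ℝ K)
    {x p : E} (hp : p ∈ K) (hmin : ∀ z ∈ K, ‖x - p‖ ≤ ‖x - z‖) {y : E} (hy : y ∈ K) :
    ‖p - y‖ ^ 2 + ‖x - p‖ ^ 2 ≤ ‖x - y‖ ^ 2 := by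
  have hobtuse : 0 ≤ ⟪x - p, p - y⟫ := by
    rw [← neg_sub y p, inner_neg_right, neg_nonneg]
    exact real_inner_sub_le_zero_of_forall_norm_sub_le hK hp hmin hy
  calc ‖p - y‖ ^ 2 + ‖x - p‖ ^ 2
      ≤ ‖x - p‖ ^ 2 + 2 * ⟪x - p, p - y⟫ + ‖p - y‖ ^ 2 := by linarith
    _ = ‖x - y‖ ^ 2 := by rw [← norm_add_sq_real, sub_add_sub_cancel]

end Projection

theorem Metric.le_infDist_sq {α : Type*} [PseudoMetricSpace α] {s : Set α} (hs : s.Nonempty)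
    {x : α} {a : ℝ} (h : ∀ y ∈ s, a ≤ dist x y ^ 2) : a ≤ infDist x s ^ 2 := by
  rw [← Real.sqrt_le_left infDist_nonneg, le_infDist hs]
  intro y hy
  exact (Real.sqrt_le_left dist_nonneg).2 (h y hy)

theorem stmt_2_general (m : ℕ) (K K0 : Set (EuclideanSpace ℝ (Fin m)))
    (hne0 : K0.Nonempty)
    (hconv : Convex ℝ K)
    (hsub : K0 ⊆ K)
    (P : EuclideanSpace ℝ (Fin m) → EuclideanSpace ℝ (Fin m))
    (hP : ∀ x, P x ∈ K ∧ ∀ y ∈ K, ‖x - P x‖ ≤ ‖x - y‖)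
    (x : EuclideanSpace ℝ (Fin m)) :
    Metric.infDist (P x) K0 ^ 2 + Metric.infDist x K ^ 2 ≤ Metric.infDist x K0 ^ 2 := by
  obtain ⟨hPx, hmin⟩ := hP x
  refine le_infDist_sq hne0 fun y hy => ?_
  calc infDist (P x) K0 ^ 2 + infDist x K ^ 2 ≤ dist (P x) y ^ 2 + dist x (P x) ^ 2 :=
        add_le_add (pow_le_pow_left₀ infDist_nonneg (infDist_le_dist_of_mem hy) 2)
          (pow_le_pow_left₀ infDist_nonneg (infDist_le_dist_of_mem hPx) 2)
    _ ≤ dist x y ^ 2 := by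
        simpa only [dist_eq_norm] using
          norm_sub_sq_add_norm_sub_sq_le_of_forall_norm_sub_le hconv hPx hmin (hsub hy)

theorem stmt_2 (m : ℕ) (K K0 : Set (EuclideanSpace ℝ (Fin m)))
    (hne0 : K0.Nonempty) (hcl0 : IsClosed K0) (hconv0 : Convex ℝ K0)
    (hne : K.Nonempty) (hcl : IsClosed K) (hconv : Convex ℝ K)
    (hsub : K0 ⊆ K)
    (P : EuclideanSpace ℝ (Fin m) → EuclideanSpace ℝ (Fin m))
    (hP : ∀ x, P x ∈ K ∧ ∀ y ∈ K, ‖x - P x‖ ≤ ‖x - y‖)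
    (x : EuclideanSpace ℝ (Fin m)) :
    Metric.infDist (P x) K0 ^ 2 + Metric.infDist x K ^ 2 ≤ Metric.infDist x K0 ^ 2 :=
  stmt_2_general m K K0 hne0 hconv hsub P hP x
end

section
/- Let K be a nonempty closed convex set in R^m and suppose the iterates satisfy x(k+1) = (1−β_k)·z* + β_k·P_K(z*) + Δ_k where β_k ∈ [0,1], 1 − β_k ≥ Π_{l=0}^k (1−α_l) for a sequence α_l ∈ [0,1), and |Δ_k| ≤ d*·Σ_{l=0}^k α_l. If Σ_l α_l < ∞ and dist(z*, K) > (d*·Σ_{l=0}^∞ α_l)/(Π_{l=0}^∞ (1−α_l)), then liminf_{k→∞} dist(x(k), K) > 0. -/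
/-!
Moving `z` a fraction `β` of the way towards its projection `P z` multiplies its distance to `K`
by exactly `1 - β`, and `dist(·, K)` is 1-Lipschitz, so
`dist(x (k+1), K) ≥ (1 - β_k) dist(z, K) - ‖Δ_k‖ ≥ Q dist(z, K) - d S`, where
`Q = ∏ (1 - α_l) > 0` and `S = ∑ α_l`. The hypothesis on `dist(z, K)` says this uniform lower bound
is positive.
-/

open Filter Metric

lemma Real.summable_log_one_sub {ι : Type*} {α : ι → ℝ} (hα : Summable α) :
    Summable fun i => Real.log (1 - α i) := by
  simpa [sub_eq_add_neg] using Real.summable_log_one_add_of_summable hα.neg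

section Tprod

variable {ι : Type*} {f : ι → ℝ}

lemma Real.tprod_pos_of_summable_log (hpos : ∀ i, 0 < f i)
    (hlog : Summable fun i => Real.log (f i)) : 0 < ∏' i, f i := by
  rw [← Real.rexp_tsum_eq_tprod hpos hlog]
  exact Real.exp_pos _

lemma Real.tprod_le_prod_of_summable_log (hpos : ∀ i, 0 < f i) (hle : ∀ i, f i ≤ 1)
    (hlog : Summable fun i => Real.log (f i)) (s : Finset ι) : ∏' i, f i ≤ ∏ i ∈ s, f i := by
  have hlog_nonpos : ∀ i, Real.log (f i) ≤ 0 := fun i => Real.log_nonpos (hpos i).le (hle i)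
  have hsum : ∑' i, Real.log (f i) ≤ ∑ i ∈ s, Real.log (f i) := by
    have := hlog.neg.sum_le_tsum s fun i _ => neg_nonneg.mpr (hlog_nonpos i)
    simpa [tsum_neg] using this
  calc ∏' i, f i = Real.exp (∑' i, Real.log (f i)) := (Real.rexp_tsum_eq_tprod hpos hlog).symm
    _ ≤ Real.exp (∑ i ∈ s, Real.log (f i)) := Real.exp_le_exp.mpr hsum
    _ = ∏ i ∈ s, f i := by
      rw [Real.exp_sum]
      exact Finset.prod_congr rfl fun i _ => Real.exp_log (hpos i)

end Tprod

lemma infDist_eq_norm_sub_of_forall_norm_sub_le {E : Type*} [SeminormedAddCommGroup E]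
    {K : Set E} {z p : E} (hp : p ∈ K)
    (hnear : ∀ y ∈ K, ‖z - p‖ ≤ ‖z - y‖) : infDist z K = ‖z - p‖ := by
  refine le_antisymm ?_ ((le_infDist ⟨p, hp⟩).mpr fun y hy => ?_)
  · simpa [dist_eq_norm] using infDist_le_dist_of_mem (x := z) hp
  · simpa [dist_eq_norm] using hnear y hy

section Projection

variable {E : Type*} [NormedAddCommGroup E] [NormedSpace ℝ E] {K : Set E} {z p : E}

lemma one_sub_mul_infDist_sub_norm_le (hp : p ∈ K) (hnear : ∀ y ∈ K, ‖z - p‖ ≤ ‖z - y‖)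
    {β : ℝ} (hβ : 0 ≤ β) (Δ : E) :
    (1 - β) * infDist z K - ‖Δ‖ ≤ infDist ((1 - β) • z + β • p + Δ) K := by
  set w := (1 - β) • z + β • p
  have hzw : dist z w = β * infDist z K := by
    rw [infDist_eq_norm_sub_of_forall_norm_sub_le hp hnear, dist_eq_norm,
      show z - w = β • (z - p) by module, norm_smul, Real.norm_of_nonneg hβ]
  have hw : dist w (w + Δ) = ‖Δ‖ := by simp [dist_eq_norm]
  linarith [infDist_le_infDist_add_dist (x := z) (y := w) (s := K),
    infDist_le_infDist_add_dist (x := w) (y := w + Δ) (s := K)]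

lemma infDist_le_norm_sub_add_norm (hp : p ∈ K) {β : ℝ} (hβ : β ∈ Set.Icc (0 : ℝ) 1) (Δ : E) :
    infDist ((1 - β) • z + β • p + Δ) K ≤ ‖z - p‖ + ‖Δ‖ := calc
  infDist ((1 - β) • z + β • p + Δ) K ≤ ‖(1 - β) • (z - p) + Δ‖ := by
    simpa [dist_eq_norm, show (1 - β) • z + β • p + Δ - p = (1 - β) • (z - p) + Δ by module]
      using infDist_le_dist_of_mem (x := (1 - β) • z + β • p + Δ) hp
  _ ≤ (1 - β) * ‖z - p‖ + ‖Δ‖ := by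
    grw [norm_add_le, norm_smul, Real.norm_of_nonneg (sub_nonneg.mpr hβ.2)]
  _ ≤ ‖z - p‖ + ‖Δ‖ := by nlinarith [hβ.1, norm_nonneg (z - p)]

end Projection

-- The upper bound `b` is needed: in `ℝ`, `liminf` of a sequence unbounded above is a junk value.
lemma le_liminf_of_forall_le_succ {u : ℕ → ℝ} {a b : ℝ} (hlow : ∀ k, a ≤ u (k + 1))
    (hup : ∀ k, u (k + 1) ≤ b) : a ≤ atTop.liminf u := by
  rw [← liminf_nat_add u 1]
  exact le_liminf_of_le (isBoundedUnder_of ⟨b, hup⟩).isCoboundedUnder_ge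
    (Eventually.of_forall hlow)

theorem stmt_19_general (m : ℕ) (K : Set (EuclideanSpace ℝ (Fin m)))
    (P : EuclideanSpace ℝ (Fin m) → EuclideanSpace ℝ (Fin m))
    (hP : ∀ x, P x ∈ K ∧ ∀ y ∈ K, ‖x - P x‖ ≤ ‖x - y‖)
    (z : EuclideanSpace ℝ (Fin m)) (d : ℝ) (hd : 0 ≤ d)
    (α : ℕ → ℝ) (hα0 : ∀ l, 0 ≤ α l) (hα1 : ∀ l, α l < 1) (hαsum : Summable α)
    (β : ℕ → ℝ) (hβ : ∀ k, β k ∈ Set.Icc (0 : ℝ) 1)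
    (Δ : ℕ → EuclideanSpace ℝ (Fin m))
    (x : ℕ → EuclideanSpace ℝ (Fin m))
    (hx : ∀ k, x (k + 1) = (1 - β k) • z + β k • P z + Δ k)
    (hβα : ∀ k, 1 - β k ≥ ∏ l ∈ Finset.range (k + 1), (1 - α l))
    (hΔ : ∀ k, ‖Δ k‖ ≤ d * ∑ l ∈ Finset.range (k + 1), α l)
    (hfar : Metric.infDist z K > (d * ∑' l, α l) / (∏' l, (1 - α l))) :
    0 < Filter.atTop.liminf (fun k => Metric.infDist (x k) K) := by
  set D := infDist z K
  set S := ∑' l, α l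
  set Q := ∏' l, (1 - α l)
  have hpos : ∀ l, 0 < 1 - α l := fun l => sub_pos.mpr (hα1 l)
  have hlog := Real.summable_log_one_sub hαsum
  have hQ : 0 < Q := Real.tprod_pos_of_summable_log hpos hlog
  have hβQ : ∀ k, Q ≤ 1 - β k := fun k =>
    (Real.tprod_le_prod_of_summable_log hpos (fun l => sub_le_self 1 (hα0 l)) hlog _).trans (hβα k)
  have hΔS : ∀ k, ‖Δ k‖ ≤ d * S := fun k =>
    (hΔ k).trans (mul_le_mul_of_nonneg_left (hαsum.sum_le_tsum _ fun l _ => hα0 l) hd)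
  have hgap : 0 < Q * D - d * S := by
    have := (div_lt_iff₀ hQ).mp hfar
    linarith
  have hlower : ∀ k, Q * D - d * S ≤ infDist (x (k + 1)) K := fun k => by
    calc Q * D - d * S ≤ (1 - β k) * D - ‖Δ k‖ := by
          gcongr
          exacts [infDist_nonneg, hβQ k, hΔS k]
      _ ≤ infDist (x (k + 1)) K :=
          hx k ▸ one_sub_mul_infDist_sub_norm_le (hP z).1 (hP z).2 (hβ k).1 _
  have hupper : ∀ k, infDist (x (k + 1)) K ≤ ‖z - P z‖ + d * S := fun k => by
    rw [hx]
    linarith [infDist_le_norm_sub_add_norm (z := z) (hP z).1 (hβ k) (Δ k), hΔS k]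
  exact hgap.trans_le (le_liminf_of_forall_le_succ hlower hupper)

theorem stmt_19 (m : ℕ) (K : Set (EuclideanSpace ℝ (Fin m)))
    (hne : K.Nonempty) (hcl : IsClosed K) (hconv : Convex ℝ K)
    (P : EuclideanSpace ℝ (Fin m) → EuclideanSpace ℝ (Fin m))
    (hP : ∀ x, P x ∈ K ∧ ∀ y ∈ K, ‖x - P x‖ ≤ ‖x - y‖)
    (z : EuclideanSpace ℝ (Fin m)) (d : ℝ) (hd : 0 ≤ d)
    (α : ℕ → ℝ) (hα0 : ∀ l, 0 ≤ α l) (hα1 : ∀ l, α l < 1) (hαsum : Summable α)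
    (β : ℕ → ℝ) (hβ : ∀ k, β k ∈ Set.Icc (0 : ℝ) 1)
    (Δ : ℕ → EuclideanSpace ℝ (Fin m))
    (x : ℕ → EuclideanSpace ℝ (Fin m))
    (hx : ∀ k, x (k + 1) = (1 - β k) • z + β k • P z + Δ k)
    (hβα : ∀ k, 1 - β k ≥ ∏ l ∈ Finset.range (k + 1), (1 - α l))
    (hΔ : ∀ k, ‖Δ k‖ ≤ d * ∑ l ∈ Finset.range (k + 1), α l)
    (hfar : Metric.infDist z K > (d * ∑' l, α l) / (∏' l, (1 - α l))) :
    0 < Filter.atTop.liminf (fun k => Metric.infDist (x k) K) :=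
  stmt_19_general m K P hP z d hd α hα0 hα1 hαsum β hβ Δ x hx hβα hΔ hfar
end
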